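/- In the category of posets, a monotone map f : A → B is a regular epimorphism if and only if it is surjective and for all y ≤ y' in B there exist finitely many elements x_0 ≤ x_1, x_1' ≤ x_2, …, x_n' ≤ x_{n+1} in A with f(x_0) = y, f(x_1') = f(x_1), …, f(x_n') = f(x_n), and f(x_{n+1}) = y'. -/

import Mathlib

/-!
Every monotone `f : A → B` factors through the range of `f` ordered by the reflexive-transitive
closure of the relation `f a ≤ f b` for `a ≤ b` (`OrderHom.GenRange`), and chains of this
closure are exactly the zig-zags of the statement. If `f` is a coequalizer, the factor
`A → GenRange f` is coequalized by the same pair, so it descends to a map `B → GenRange f`; since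
`f` is epi this map is a section of the inclusion, which forces `f` to be surjective and every
`y ≤ y'` to be such a chain. Conversely, if `f` is surjective with this property, it is the
coequalizer of its kernel pair: a monotone map constant on the fibres of `f` descends along any
set-theoretic section of `f`, and the descended map is monotone by induction along the chains.
-/

open CategoryTheory CategoryTheory.Limits Relation

namespace OrderHom

variable {α β : Type*} [PartialOrder α] [PartialOrder β] (f : α →o β)

def ImageLE (y y' : β) : Prop :=
  ∃ a b, a ≤ b ∧ f a = y ∧ f b = y'

def ZigZag (y y' : β) : Prop :=
  ∃ (n : ℕ) (x : Fin (n + 2) → α) (x' : Fin n → α),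
    f (x 0) = y ∧ f (x (Fin.last (n + 1))) = y' ∧ x 0 ≤ x 1 ∧
    (∀ i : Fin n, x' i ≤ x i.succ.succ) ∧
    (∀ i : Fin n, f (x' i) = f (x i.succ.castSucc))

variable {f}

theorem ZigZag.of_le {a b : α} (h : a ≤ b) : f.ZigZag (f a) (f b) :=
  ⟨0, ![a, b], Fin.elim0, rfl, rfl, h, fun i => i.elim0, fun i => i.elim0⟩

theorem ZigZag.cons {a a₁ : α} (h : a ≤ a₁) {y' : β} (hz : f.ZigZag (f a₁) y') :
    f.ZigZag (f a) y' := by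
  obtain ⟨n, x, x', h0, hlast, h01, hle, heq⟩ := hz
  refine ⟨n + 1, Fin.cons a (Fin.cons a₁ (x ∘ Fin.succ)), Fin.cons (x 0) x',
    rfl, ?_, h, ?_, ?_⟩
  · simpa [← Fin.succ_last] using hlast
  · refine Fin.cases ?_ fun i => ?_
    · exact h01
    · simpa using hle i
  · refine Fin.cases ?_ fun i => ?_
    · simpa using h0
    · simpa [← Fin.succ_castSucc] using heq i

theorem zigZag_of_reflTransGen {y y' : β} (h : ReflTransGen f.ImageLE y y')
    (hy : y ∈ Set.range f) : f.ZigZag y y' := by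
  induction h using Relation.ReflTransGen.head_induction_on with
  | refl =>
    obtain ⟨a, rfl⟩ := hy
    exact ZigZag.of_le le_rfl
  | head hstep _ ih =>
    obtain ⟨a, b, hab, rfl, rfl⟩ := hstep
    exact ZigZag.cons hab (ih ⟨b, rfl⟩)

theorem ZigZag.reflTransGen {y y' : β} (h : f.ZigZag y y') : ReflTransGen f.ImageLE y y' := by
  obtain ⟨n, x, x', rfl, rfl, h01, hle, heq⟩ := h
  have from_start : ∀ k, ReflTransGen f.ImageLE (f (x 0)) (f (x k)) :=
    Fin.induction .refl fun k ih => ih.tail <|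
      Fin.cases ⟨_, _, h01, rfl, rfl⟩ (fun i => ⟨_, _, hle i, heq i, rfl⟩) k
  exact from_start _

theorem reflTransGen_iff_zigZag {y y' : β} (hy : y ∈ Set.range f) :
    ReflTransGen f.ImageLE y y' ↔ f.ZigZag y y' :=
  ⟨fun h => zigZag_of_reflTransGen h hy, ZigZag.reflTransGen⟩

theorem map_le_map_of_reflTransGen {γ : Type*} [Preorder γ] {g : β → γ}
    (hg : ∀ a b, a ≤ b → g (f a) ≤ g (f b)) {y y' : β} (h : ReflTransGen f.ImageLE y y') :
    g y ≤ g y' := by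
  induction h with
  | refl => exact le_rfl
  | tail _ hstep ih =>
    obtain ⟨a, b, hab, rfl, rfl⟩ := hstep
    exact ih.trans (hg a b hab)

theorem le_of_reflTransGen {y y' : β} (h : ReflTransGen f.ImageLE y y') : y ≤ y' :=
  map_le_map_of_reflTransGen (g := id) (fun _ _ hab => f.monotone hab) h

theorem monotone_comp_surjInv {γ : Type*} [Preorder γ] (hsurj : Function.Surjective f)
    (hgen : ∀ y y' : β, y ≤ y' → ReflTransGen f.ImageLE y y') {g : α → γ} (hg : Monotone g)
    (hfib : ∀ a b, f a = f b → g a = g b) : Monotone (g ∘ Function.surjInv hsurj) := by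
  have hsec (a : α) : g (Function.surjInv hsurj (f a)) = g a :=
    hfib _ _ (Function.surjInv_eq hsurj _)
  refine fun y y' h => map_le_map_of_reflTransGen (fun a b hab => ?_) (hgen y y' h)
  simpa only [Function.comp_apply, hsec] using hg hab

variable (f) in
def GenRange : Type _ := Set.range f

instance : PartialOrder f.GenRange where
  le u v := ReflTransGen f.ImageLE u.1 v.1
  le_refl _ := .refl
  le_trans _ _ _ := .trans
  le_antisymm _ _ h h' := Subtype.ext ((le_of_reflTransGen h).antisymm (le_of_reflTransGen h'))

variable (f) in
def toGenRange : α →o f.GenRange where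
  toFun a := ⟨f a, a, rfl⟩
  monotone' a b h := .single ⟨a, b, h, rfl, rfl⟩

variable (f) in
def GenRange.val : f.GenRange →o β where
  toFun u := u.1
  monotone' _ _ h := le_of_reflTransGen h

end OrderHom

namespace PartOrd

variable {A B : PartOrd} (f : A ⟶ B)

theorem surjective_and_reflTransGen_of_regularEpi (hf : RegularEpi f) :
    Function.Surjective f ∧ ∀ y y' : B, y ≤ y' → ReflTransGen f.hom.ImageLE y y' := by
  let q : A ⟶ of f.hom.GenRange := ofHom f.hom.toGenRange
  let i : of f.hom.GenRange ⟶ B := ofHom (OrderHom.GenRange.val f.hom)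
  have hq : hf.left ≫ q = hf.right ≫ q := by
    ext w
    exact Subtype.ext (ConcreteCategory.congr_hom hf.w w)
  obtain ⟨t, ht⟩ := hf.desc' q hq
  have hti : t ≫ i = 𝟙 B := (hf.epi f).left_cancellation _ _ (by rw [reassoc_of% ht]; rfl)
  have ht_val (y : B) : (t y).1 = y := ConcreteCategory.congr_hom hti y
  refine ⟨fun y => ?_, fun y y' h => ?_⟩
  · obtain ⟨a, ha⟩ := (t y).2
    exact ⟨a, ha.trans (ht_val y)⟩
  · have h' : ReflTransGen f.hom.ImageLE (t y).1 (t y').1 := t.hom.monotone h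
    rwa [ht_val, ht_val] at h'

def kernelPair : PartOrd := of {p : A × A // f p.1 = f p.2}

def kernelPair.fst : kernelPair f ⟶ A := ofHom ⟨fun p => p.1.1, fun _ _ h => h.1⟩

def kernelPair.snd : kernelPair f ⟶ A := ofHom ⟨fun p => p.1.2, fun _ _ h => h.2⟩

theorem kernelPair.condition : kernelPair.fst f ≫ f = kernelPair.snd f ≫ f := by
  ext p
  exact p.2

noncomputable def kernelPair.isColimit (hsurj : Function.Surjective f)
    (hgen : ∀ y y' : B, y ≤ y' → ReflTransGen f.hom.ImageLE y y') :
    IsColimit (Cofork.ofπ f (kernelPair.condition f)) := by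
  have : Epi f := ConcreteCategory.epi_of_surjective f hsurj
  refine Cofork.IsColimit.ofExistsUnique fun c => ?_
  have hfib (a b : A) (h : f a = f b) : c.π a = c.π b :=
    ConcreteCategory.congr_hom c.condition ⟨(a, b), h⟩
  let d : B ⟶ c.pt :=
    ofHom ⟨_, OrderHom.monotone_comp_surjInv hsurj hgen c.π.hom.monotone hfib⟩
  have hd : f ≫ d = c.π := by
    ext a
    exact hfib _ _ (Function.surjInv_eq hsurj _)
  exact ⟨d, hd, fun m hm => (cancel_epi f).1 (hm.trans hd.symm)⟩

theorem regularEpi_iff_surjective_and_reflTransGen :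
    Nonempty (RegularEpi f) ↔
      Function.Surjective f ∧ ∀ y y' : B, y ≤ y' → ReflTransGen f.hom.ImageLE y y' :=
  ⟨fun ⟨hf⟩ => surjective_and_reflTransGen_of_regularEpi f hf,
    fun ⟨hsurj, hgen⟩ => ⟨⟨_, _, _, _, kernelPair.isColimit f hsurj hgen⟩⟩⟩

end PartOrd

/-- In the category of posets, a monotone map `f : A → B` is a regular
epimorphism iff it is surjective and every inequality `y ≤ y'` in `B` is generated by a
finite zig-zag of inequalities in `A`: there are `x₀ ≤ x₁, x₁' ≤ x₂, …, xₙ' ≤ x_{n+1}`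
with `f x₀ = y`, `f xᵢ' = f xᵢ` for `i = 1, …, n`, and `f x_{n+1} = y'`. -/
theorem PartOrd.regularEpi_iff {A B : PartOrd} (f : A ⟶ B) :
    Nonempty (RegularEpi f) ↔
      (Function.Surjective ((forget PartOrd).map f) ∧
        ∀ y y' : B, y ≤ y' →
          ∃ (n : ℕ) (x : Fin (n + 2) → A) (x' : Fin n → A),
            (forget PartOrd).map f (x 0) = y ∧
            (forget PartOrd).map f (x (Fin.last (n + 1))) = y' ∧
            x 0 ≤ x 1 ∧
            (∀ i : Fin n, x' i ≤ x i.succ.succ) ∧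
            (∀ i : Fin n,
              (forget PartOrd).map f (x' i) = (forget PartOrd).map f (x i.succ.castSucc))) := by
  rw [regularEpi_iff_surjective_and_reflTransGen]
  exact and_congr_right fun hsurj => forall₂_congr fun y _ => imp_congr_right fun _ =>
    OrderHom.reflTransGen_iff_zigZag (hsurj y)
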